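/- For t ≥ 0, with a = (1−√t)² and b = (1+√t)², the integral ∫_a^b (1/x²)·√((b−x)(x−a)) dx equals 2π·min{1,t}/|1−t|, where the right-hand side is interpreted as +∞ in the case t = 1. -/

import Mathlib

/-!
For `0 < a < b` and `S x = √((b - x) * (x - a))`, the function
`-S x / x - arcsin ((2x - (a + b)) / (b - a)) + (a + b) / (2√(ab)) · arcsin (((a + b)x - 2ab) / ((b - a)x))`
is a primitive of `S x / x²` on `(a, b)`. Both arcsine arguments run from `-1` to `1` over `[a, b]`,
so the integral equals `π ((a + b) / (2√(ab)) - 1)`; with `a + b = 2(1 + t)` and `√(ab) = |1 - t|`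
this is `2π min(1, t) / |1 - t|`. For `t = 1` we get `a = 0`, and near `0` the integrand dominates `1 / x`.
-/

open MeasureTheory Filter Topology
open scoped ENNReal

open Set Real

lemma HasDerivAt.arcsin_of_one_sub_sq_eq {f : ℝ → ℝ} {f' w x : ℝ} (hf : HasDerivAt f f' x)
    (hw : 0 < w) (h : 1 - f x ^ 2 = w ^ 2) :
    HasDerivAt (fun y => arcsin (f y)) (f' / w) x := by
  have hlt : f x ^ 2 < 1 := by nlinarith
  have hsqrt : √(1 - f x ^ 2) = w := by rw [h, Real.sqrt_sq hw.le]
  have h₁ : f x ≠ -1 := by rintro h'; rw [h'] at hlt; norm_num at hlt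
  have h₂ : f x ≠ 1 := by rintro h'; rw [h'] at hlt; norm_num at hlt
  refine ((Real.hasDerivAt_arcsin h₁ h₂).comp x hf).congr_deriv ?_
  rw [hsqrt]; ring

lemma lintegral_Ioo_zero_inv_eq_top {c : ℝ} (hc : 0 < c) :
    ∫⁻ x in Ioo 0 c, ENNReal.ofReal x⁻¹ = ∞ := by
  have hnonneg : 0 ≤ᵐ[volume.restrict (Ioo 0 c)] fun x : ℝ => x⁻¹ :=
    (ae_restrict_iff' measurableSet_Ioo).2 (ae_of_all _ fun x hx => inv_nonneg.2 hx.1.le)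
  rw [← not_ne_iff, lintegral_ofReal_ne_top_iff_integrable
    measurable_inv.aestronglyMeasurable hnonneg, ← IntegrableOn,
    ← intervalIntegrable_iff_integrableOn_Ioo_of_le hc.le, intervalIntegrable_inv_iff]
  simp [hc.ne, hc.le]

lemma lintegral_Ioo_zero_sqrt_div_sq_eq_top {b : ℝ} (hb : 0 < b) :
    ∫⁻ x in Ioo 0 b, ENNReal.ofReal (√((b - x) * x) / x ^ 2) = ∞ := by
  refine top_unique ?_
  calc ∞ = ∫⁻ x in Ioo 0 (b / 2), ENNReal.ofReal x⁻¹ :=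
        (lintegral_Ioo_zero_inv_eq_top (half_pos hb)).symm
    _ ≤ ∫⁻ x in Ioo 0 (b / 2), ENNReal.ofReal (√((b - x) * x) / x ^ 2) := by
        refine setLIntegral_mono' measurableSet_Ioo fun x ⟨hx0, hxb⟩ => ENNReal.ofReal_le_ofReal ?_
        have hx : x ≤ √((b - x) * x) := (Real.le_sqrt hx0.le (by nlinarith)).2 (by nlinarith)
        calc x⁻¹ = x / x ^ 2 := by field_simp
          _ ≤ √((b - x) * x) / x ^ 2 := by gcongr
    _ ≤ ∫⁻ x in Ioo 0 b, ENNReal.ofReal (√((b - x) * x) / x ^ 2) :=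
        lintegral_mono_set (Ioo_subset_Ioo_right (half_le_self hb.le))

noncomputable def primitiveSqrtDivSq (a b x : ℝ) : ℝ :=
  -√((b - x) * (x - a)) / x - arcsin ((2 * x - (a + b)) / (b - a))
    + (a + b) / (2 * √(a * b)) * arcsin (((a + b) * x - 2 * (a * b)) / ((b - a) * x))

section Primitive

variable {a b x : ℝ}

lemma hasDerivAt_arcsin_affine (hx : x ∈ Ioo a b) :
    HasDerivAt (fun y => arcsin ((2 * y - (a + b)) / (b - a))) (1 / √((b - x) * (x - a))) x := by
  obtain ⟨hax, hxb⟩ := hx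
  have hba : 0 < b - a := by linarith
  have hS : 0 < √((b - x) * (x - a)) := Real.sqrt_pos.2 (by nlinarith)
  have hS2 : √((b - x) * (x - a)) ^ 2 = (b - x) * (x - a) := Real.sq_sqrt (by nlinarith)
  have hf : HasDerivAt (fun y => (2 * y - (a + b)) / (b - a)) (2 / (b - a)) x := by
    simpa using (((hasDerivAt_id' x).const_mul 2).sub_const (a + b)).div_const (b - a)
  refine (hf.arcsin_of_one_sub_sq_eq (w := 2 * √((b - x) * (x - a)) / (b - a)) (by positivity)
    ?_).congr_deriv ?_
  · rw [div_pow, div_pow, mul_pow, hS2]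
    field_simp
    ring
  · field_simp

lemma hasDerivAt_arcsin_mobius (ha : 0 < a) (hx : x ∈ Ioo a b) :
    HasDerivAt (fun y => arcsin (((a + b) * y - 2 * (a * b)) / ((b - a) * y)))
      (√(a * b) / (x * √((b - x) * (x - a)))) x := by
  obtain ⟨hax, hxb⟩ := hx
  have hba : 0 < b - a := by linarith
  have hx0 : 0 < x := ha.trans hax
  have hS : 0 < √((b - x) * (x - a)) := Real.sqrt_pos.2 (by nlinarith)
  have hS2 : √((b - x) * (x - a)) ^ 2 = (b - x) * (x - a) := Real.sq_sqrt (by nlinarith)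
  have hR : 0 < √(a * b) := Real.sqrt_pos.2 (by nlinarith)
  have hR2 : √(a * b) ^ 2 = a * b := Real.sq_sqrt (by nlinarith)
  have hf : HasDerivAt (fun y => ((a + b) * y - 2 * (a * b)) / ((b - a) * y))
      (2 * (a * b) / ((b - a) * x ^ 2)) x := by
    refine ((((hasDerivAt_id' x).const_mul (a + b)).sub_const (2 * (a * b))).div
      ((hasDerivAt_id' x).const_mul (b - a)) (by positivity)).congr_deriv ?_
    field_simp
    ring
  refine (hf.arcsin_of_one_sub_sq_eq
    (w := 2 * √(a * b) * √((b - x) * (x - a)) / ((b - a) * x)) (by positivity) ?_).congr_deriv ?_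
  · simp only [div_pow, mul_pow, hS2, hR2]
    field_simp
    ring
  · field_simp
    exact hR2.symm

lemma hasDerivAt_neg_sqrt_div_self (ha : 0 < a) (hx : x ∈ Ioo a b) :
    HasDerivAt (fun y => -√((b - y) * (y - a)) / y)
      (√((b - x) * (x - a)) / x ^ 2 + (2 * x - (a + b)) / (2 * x * √((b - x) * (x - a)))) x := by
  obtain ⟨hax, hxb⟩ := hx
  have hx0 : 0 < x := ha.trans hax
  have hP : 0 < (b - x) * (x - a) := by nlinarith
  have hS : 0 < √((b - x) * (x - a)) := Real.sqrt_pos.2 hP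
  have hS2 : √((b - x) * (x - a)) ^ 2 = (b - x) * (x - a) := Real.sq_sqrt hP.le
  have hsqrt : HasDerivAt (fun y => √((b - y) * (y - a)))
      ((a + b - 2 * x) / (2 * √((b - x) * (x - a)))) x := by
    have hp : HasDerivAt (fun y => (b - y) * (y - a)) (a + b - 2 * x) x := by
      refine (((hasDerivAt_id' x).const_sub b).mul ((hasDerivAt_id' x).sub_const a)).congr_deriv ?_
      ring
    exact hp.sqrt hP.ne'
  refine (hsqrt.neg.div (hasDerivAt_id' x) hx0.ne').congr_deriv ?_
  simp only [Pi.neg_apply]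
  field_simp
  rw [hS2]
  ring

lemma hasDerivAt_primitiveSqrtDivSq (ha : 0 < a) (hx : x ∈ Ioo a b) :
    HasDerivAt (primitiveSqrtDivSq a b) (√((b - x) * (x - a)) / x ^ 2) x := by
  have hx0 : 0 < x := ha.trans hx.1
  have hS : 0 < √((b - x) * (x - a)) := Real.sqrt_pos.2 (by nlinarith [hx.1, hx.2])
  have hR : 0 < √(a * b) := Real.sqrt_pos.2 (by nlinarith [hx.1, hx.2])
  refine (((hasDerivAt_neg_sqrt_div_self ha hx).sub (hasDerivAt_arcsin_affine hx)).add
    ((hasDerivAt_arcsin_mobius ha hx).const_mul _)).congr_deriv ?_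
  set S := √((b - x) * (x - a))
  set R := √(a * b)
  field_simp
  ring

lemma continuousOn_primitiveSqrtDivSq (ha : 0 < a) (hab : a < b) :
    ContinuousOn (primitiveSqrtDivSq a b) (Icc a b) := by
  have hx0 : ∀ x ∈ Icc a b, x ≠ 0 := fun x hx => (ha.trans_le hx.1).ne'
  refine ContinuousOn.add (ContinuousOn.sub ?_ ?_)
    (continuousOn_const.mul (continuous_arcsin.comp_continuousOn ?_))
  · exact ContinuousOn.div (by fun_prop) continuousOn_id hx0
  · exact (continuous_arcsin.comp (by fun_prop)).continuousOn
  · exact ContinuousOn.div (by fun_prop) (by fun_prop)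
      fun x hx => mul_ne_zero (sub_pos.2 hab).ne' (hx0 x hx)

lemma primitiveSqrtDivSq_sub (ha : 0 < a) (hab : a < b) :
    primitiveSqrtDivSq a b b - primitiveSqrtDivSq a b a = π * ((a + b) / (2 * √(a * b)) - 1) := by
  have hba : b - a ≠ 0 := (sub_pos.2 hab).ne'
  have hb : b ≠ 0 := (ha.trans hab).ne'
  have hright : ((a + b) * b - 2 * (a * b)) / ((b - a) * b) = 1 := by field_simp; ring
  have hleft : ((a + b) * a - 2 * (a * b)) / ((b - a) * a) = -1 := by field_simp; ring
  have hright' : (2 * b - (a + b)) / (b - a) = 1 := by field_simp; ring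
  have hleft' : (2 * a - (a + b)) / (b - a) = -1 := by field_simp; ring
  simp only [primitiveSqrtDivSq, sub_self, mul_zero, zero_mul, Real.sqrt_zero, neg_zero, zero_div,
    hright, hleft, hright', hleft', arcsin_one, arcsin_neg_one]
  ring

lemma integral_sqrt_div_sq (ha : 0 < a) (hab : a < b) :
    ∫ x in a..b, √((b - x) * (x - a)) / x ^ 2 = π * ((a + b) / (2 * √(a * b)) - 1) := by
  have hcont : ContinuousOn (fun x => √((b - x) * (x - a)) / x ^ 2) (uIcc a b) := by
    rw [uIcc_of_le hab.le]
    exact ContinuousOn.div (by fun_prop) (by fun_prop)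
      fun x hx => pow_ne_zero 2 (ha.trans_le hx.1).ne'
  rw [intervalIntegral.integral_eq_sub_of_hasDeriv_right_of_le hab.le
    (continuousOn_primitiveSqrtDivSq ha hab)
    (fun x hx => (hasDerivAt_primitiveSqrtDivSq ha hx).hasDerivWithinAt)
    hcont.intervalIntegrable, primitiveSqrtDivSq_sub ha hab]

lemma lintegral_Ioo_sqrt_div_sq (ha : 0 < a) (hab : a ≤ b) :
    ∫⁻ x in Ioo a b, ENNReal.ofReal (√((b - x) * (x - a)) / x ^ 2)
      = ENNReal.ofReal (π * ((a + b) / (2 * √(a * b)) - 1)) := by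
  rcases hab.eq_or_lt with rfl | hab
  · have : (a + a) / (2 * √(a * a)) = 1 := by
      rw [Real.sqrt_mul_self ha.le]; field_simp; ring
    simp [this]
  have hcont : ContinuousOn (fun x => √((b - x) * (x - a)) / x ^ 2) (Icc a b) :=
    ContinuousOn.div (by fun_prop) (by fun_prop) fun x hx => pow_ne_zero 2 (ha.trans_le hx.1).ne'
  rw [← integral_sqrt_div_sq ha hab, intervalIntegral.integral_of_le hab.le,
    integral_Ioc_eq_integral_Ioo, ofReal_integral_eq_lintegral_ofReal
      (hcont.integrableOn_Icc.mono_set Ioo_subset_Icc_self)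
      (ae_of_all _ fun x => div_nonneg (Real.sqrt_nonneg _) (sq_nonneg _))]

end Primitive

/-- For `t ≥ 0`, with `a = (1-√t)²` and `b = (1+√t)²`,
`∫_a^b (1/x²)√((b-x)(x-a)) dx = 2π min{1,t}/|1-t|`, the right-hand side being `+∞` when
`t = 1`. -/
theorem marchenko_pastur_inverse_moment_integral
    (t : ℝ) (ht : 0 ≤ t) (a b : ℝ)
    (ha : a = (1 - Real.sqrt t) ^ 2) (hb : b = (1 + Real.sqrt t) ^ 2) :
    ∫⁻ x in Set.Ioo a b, ENNReal.ofReal (Real.sqrt ((b - x) * (x - a)) / x ^ 2)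
      = if t = 1 then ⊤ else ENNReal.ofReal (2 * Real.pi * min 1 t / |1 - t|) := by
  by_cases h1 : t = 1
  · obtain rfl : a = 0 := by rw [ha, h1, Real.sqrt_one]; norm_num
    obtain rfl : b = 4 := by rw [hb, h1, Real.sqrt_one]; norm_num
    simpa only [h1, if_true, sub_zero] using lintegral_Ioo_zero_sqrt_div_sq_eq_top four_pos
  have hst : √t ^ 2 = t := Real.sq_sqrt ht
  have hsqrt_ne : 1 - √t ≠ 0 := fun h => h1 (by rw [← hst, ← sub_eq_zero.1 h]; norm_num)
  have ha0 : 0 < a := ha ▸ pow_two_pos_of_ne_zero hsqrt_ne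
  have hab : a ≤ b := by rw [ha, hb]; nlinarith [Real.sqrt_nonneg t]
  have hsum : a + b = 2 * (1 + t) := by rw [ha, hb]; linear_combination 2 * hst
  have hprod : a * b = (1 - t) ^ 2 := by rw [ha, hb]; linear_combination (√t ^ 2 + t - 2) * hst
  have habs : |1 - t| ≠ 0 := abs_ne_zero.2 (sub_ne_zero.2 (Ne.symm h1))
  have hmin : 2 * min 1 t = 1 + t - |1 - t| := by
    rw [abs_sub_comm, ← two_nsmul_inf_eq_add_sub_abs_sub, two_nsmul, two_mul]
  rw [if_neg h1, lintegral_Ioo_sqrt_div_sq ha0 hab, hsum, hprod, Real.sqrt_sq_eq_abs]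
  congr 1
  field_simp
  exact hmin.symm
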